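/- For the random walk on the half-line, suppose in addition that Z ≥ −z₀ almost surely for some z₀ > 0 and that 𝔼[(Z^+)²] < ∞. Set V(x) = (x+1)². Then for every β ∈ (0, 1/4) there exist d' ≥ 1 and b' < ∞ such that, with the taming function F(z) = ⌈z^{1/2}/μ⌉ for z > d' and F(z) = 1 for z ≤ d', one has 𝔼_x[V(X_{F(V(x))})] ≤ β·V(x) + b'·1_{[V(x) ≤ d']} for all x ≥ 0. -/

import Mathlib

open MeasureTheory ProbabilityTheory ENNReal

/-- The random walk on the half-line `X_{n+1} = (X_n + Z_{n+1})⁺` started at `x`. -/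
noncomputable def walk {Ω : Type*} (Z : ℕ → Ω → ℝ) (x : ℝ) : ℕ → Ω → ℝ
  | 0 => fun _ => x
  | n + 1 => fun ω => max (walk Z x n ω + Z (n + 1) ω) 0

/-- First return time of the walk to the atom `0`: `τ_0 = inf{n ≥ 1 : X_n = 0}`. -/
noncomputable def hitZeroTime {Ω : Type*} (Z : ℕ → Ω → ℝ) (x : ℝ) (ω : Ω) : ℕ∞ :=
  ⨅ (n : ℕ) (_ : 1 ≤ n ∧ walk Z x n ω = 0), (n : ℕ∞)

/-!
Write `m = 𝔼 Z ≤ 0`. Since `Xₖ` is independent of `Zₖ₊₁` and `((a + z)⁺)² ≤ (a + z)²`, the walk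
satisfies `𝔼 Xₖ₊₁² ≤ 𝔼 Xₖ² + 2m 𝔼 Xₖ + 𝔼 Z²`, while `Xₖ₊₁ ≥ Xₖ + Zₖ₊₁` gives `𝔼 Xₖ ≥ x + k m`.
As `m ≤ 0`, these combine to `𝔼 Xₙ² ≤ (x + n m)² + n Var Z`: the reflected walk is no more spread
out than the free one. At `n = ⌈(x + 1)/μ⌉` the drift term `(x - n μ)²` is bounded and `n Var Z`
is linear in `x`, so `𝔼 V(Xₙ) = O(x + 1)`, which is below `β V(x)` once `V(x)` is large; for small
`V(x)` a single step suffices.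
-/

section Walk

variable {Ω : Type*} {Z : ℕ → Ω → ℝ}

@[simp]
lemma walk_zero (x : ℝ) : walk Z x 0 = fun _ => x := rfl

lemma walk_succ (x : ℝ) (n : ℕ) (ω : Ω) :
    walk Z x (n + 1) ω = max (walk Z x n ω + Z (n + 1) ω) 0 := rfl

lemma memLp_walk [MeasurableSpace Ω] {P : Measure Ω} [IsFiniteMeasure P] {p : ℝ≥0∞}
    (hZ : ∀ n, MemLp (Z n) p P) (x : ℝ) : ∀ n, MemLp (walk Z x n) p P
  | 0 => memLp_const x
  | n + 1 => ((memLp_walk hZ x n).add (hZ (n + 1))).pos_part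

abbrev sigmaUpTo (Z : ℕ → Ω → ℝ) (k : ℕ) : MeasurableSpace Ω :=
  ⨆ i ∈ Set.Iic k, MeasurableSpace.comap (Z i) inferInstance

lemma comap_le_sigmaUpTo {i k : ℕ} (h : i ≤ k) :
    MeasurableSpace.comap (Z i) inferInstance ≤ sigmaUpTo Z k :=
  le_biSup (fun i => MeasurableSpace.comap (Z i) inferInstance) (Set.mem_Iic.2 h)

lemma measurable_walk_sigmaUpTo (x : ℝ) : ∀ k, Measurable[sigmaUpTo Z k] (walk Z x k)
  | 0 => measurable_const
  | k + 1 => by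
    have hpast : Measurable[sigmaUpTo Z (k + 1)] (walk Z x k) :=
      (measurable_walk_sigmaUpTo x k).mono
        (biSup_mono fun i hi => le_trans hi k.le_succ) le_rfl
    have hnew : Measurable[sigmaUpTo Z (k + 1)] (Z (k + 1)) :=
      (comap_measurable (Z (k + 1))).mono (comap_le_sigmaUpTo le_rfl) le_rfl
    exact (hpast.add hnew).max measurable_const

lemma indepFun_walk_succ [MeasurableSpace Ω] {P : Measure Ω} (hmeas : ∀ n, Measurable (Z n))
    (hindep : iIndepFun Z P) (x : ℝ) (k : ℕ) : IndepFun (walk Z x k) (Z (k + 1)) P := by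
  have h := indep_iSup_of_disjoint (fun i => (hmeas i).comap_le)
    ((iIndepFun_iff_iIndep _ _ _).1 hindep) (show Disjoint (Set.Iic k) {k + 1} by simp)
  rw [IndepFun_iff_Indep]
  exact indep_of_indep_of_le_left (indep_of_indep_of_le_right h
      (le_biSup (fun i => MeasurableSpace.comap (Z i) inferInstance) (Set.mem_singleton (k + 1))))
    (measurable_walk_sigmaUpTo x k).comap_le

end Walk

section Moments

variable {Ω : Type*} [MeasurableSpace Ω] {P : Measure Ω} [IsProbabilityMeasure P]
  {Z : ℕ → Ω → ℝ} {m v : ℝ}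

lemma add_mul_le_integral_walk (hZ : ∀ n, Integrable (Z n) P) (hmean : ∀ n, P[Z n] = m)
    (x : ℝ) : ∀ n : ℕ, x + n * m ≤ P[walk Z x n]
  | 0 => by simp
  | n + 1 => by
    have hwalk : Integrable (walk Z x n) P :=
      (memLp_walk (fun k => memLp_one_iff_integrable.2 (hZ k)) x n).integrable le_rfl
    calc x + (n + 1 : ℕ) * m = (x + n * m) + P[Z (n + 1)] := by rw [hmean]; push_cast; ring
      _ ≤ P[walk Z x n] + P[Z (n + 1)] := by gcongr; exact add_mul_le_integral_walk hZ hmean x n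
      _ = ∫ ω, walk Z x n ω + Z (n + 1) ω ∂P := (integral_add hwalk (hZ (n + 1))).symm
      _ ≤ P[walk Z x (n + 1)] :=
        integral_mono (hwalk.add (hZ (n + 1))) (hwalk.add (hZ (n + 1))).pos_part
          fun ω => le_max_left _ _

lemma integral_walk_sq_succ_le (hmeas : ∀ n, Measurable (Z n)) (hindep : iIndepFun Z P)
    (hL2 : ∀ n, MemLp (Z n) 2 P) (hmean : ∀ n, P[Z n] = m) (x : ℝ) (k : ℕ) :
    ∫ ω, walk Z x (k + 1) ω ^ 2 ∂P
      ≤ ∫ ω, walk Z x k ω ^ 2 ∂P + 2 * m * P[walk Z x k] + ∫ ω, Z (k + 1) ω ^ 2 ∂P := by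
  have hwalk := memLp_walk hL2 x k
  have hprod : Integrable (fun ω => walk Z x k ω * Z (k + 1) ω) P :=
    hwalk.integrable_mul (hL2 (k + 1))
  have hcross : ∫ ω, walk Z x k ω * Z (k + 1) ω ∂P = P[walk Z x k] * m := by
    rw [(indepFun_walk_succ hmeas hindep x k).integral_fun_mul_eq_mul_integral
      hwalk.aestronglyMeasurable (hL2 (k + 1)).aestronglyMeasurable, hmean]
  calc ∫ ω, walk Z x (k + 1) ω ^ 2 ∂P
      ≤ ∫ ω, walk Z x k ω ^ 2 + 2 * (walk Z x k ω * Z (k + 1) ω) + Z (k + 1) ω ^ 2 ∂P := by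
        refine integral_mono (memLp_walk hL2 x (k + 1)).integrable_sq
          ((hwalk.integrable_sq.add (hprod.const_mul 2)).add (hL2 (k + 1)).integrable_sq)
          fun ω => ?_
        refine (?_ : _ ≤ (walk Z x k ω + Z (k + 1) ω) ^ 2).trans_eq (by ring)
        rw [walk_succ]
        rcases le_total (walk Z x k ω + Z (k + 1) ω) 0 with h | h
        · rw [max_eq_right h, zero_pow two_ne_zero]; positivity
        · rw [max_eq_left h]
    _ = ∫ ω, walk Z x k ω ^ 2 ∂P + 2 * m * P[walk Z x k] + ∫ ω, Z (k + 1) ω ^ 2 ∂P := by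
        rw [integral_add, integral_add, integral_const_mul, hcross]
        · ring
        exacts [hwalk.integrable_sq, hprod.const_mul 2,
          hwalk.integrable_sq.add (hprod.const_mul 2), (hL2 (k + 1)).integrable_sq]

lemma integral_walk_sq_le (hmeas : ∀ n, Measurable (Z n)) (hindep : iIndepFun Z P)
    (hL2 : ∀ n, MemLp (Z n) 2 P) (hmean : ∀ n, P[Z n] = m) (hm : m ≤ 0)
    (hvar : ∀ n, Var[Z n; P] ≤ v) (x : ℝ) :
    ∀ n : ℕ, ∫ ω, walk Z x n ω ^ 2 ∂P ≤ (x + n * m) ^ 2 + n * v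
  | 0 => by simp
  | n + 1 => by
    have hstep := integral_walk_sq_succ_le hmeas hindep hL2 hmean x n
    have hdrift : 2 * m * P[walk Z x n] ≤ 2 * m * (x + n * m) :=
      mul_le_mul_of_nonpos_left
        (add_mul_le_integral_walk (fun k => (hL2 k).integrable one_le_two) hmean x n)
        (by linarith)
    have hsecond : ∫ ω, Z (n + 1) ω ^ 2 ∂P ≤ v + m ^ 2 := by
      have h := variance_eq_sub (hL2 (n + 1))
      rw [hmean] at h
      linarith [hvar (n + 1), show P[Z (n + 1) ^ 2] = ∫ ω, Z (n + 1) ω ^ 2 ∂P from rfl]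
    push_cast
    linear_combination hstep + integral_walk_sq_le hmeas hindep hL2 hmean hm hvar x n +
      hdrift + hsecond

lemma lintegral_walk_add_one_sq_le (hmeas : ∀ n, Measurable (Z n)) (hindep : iIndepFun Z P)
    (hL2 : ∀ n, MemLp (Z n) 2 P) (hmean : ∀ n, P[Z n] = m) (hm : m ≤ 0)
    (hvar : ∀ n, Var[Z n; P] ≤ v) (x : ℝ) (n : ℕ) :
    ∫⁻ ω, ENNReal.ofReal ((walk Z x n ω + 1) ^ 2) ∂P
      ≤ ENNReal.ofReal (2 * ((x + n * m) ^ 2 + n * v) + 2) := by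
  have hwalk := memLp_walk hL2 x n
  have hint : Integrable (fun ω => (walk Z x n ω + 1) ^ 2) P :=
    (hwalk.add (memLp_const 1)).integrable_sq
  rw [← ofReal_integral_eq_lintegral_ofReal hint (ae_of_all _ fun ω => sq_nonneg _)]
  gcongr
  calc ∫ ω, (walk Z x n ω + 1) ^ 2 ∂P ≤ ∫ ω, 2 * walk Z x n ω ^ 2 + 2 ∂P :=
        integral_mono hint ((hwalk.integrable_sq.const_mul 2).add (integrable_const 2))
          fun ω => by nlinarith [sq_nonneg (walk Z x n ω - 1)]
    _ = 2 * ∫ ω, walk Z x n ω ^ 2 ∂P + 2 := by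
        rw [integral_add (hwalk.integrable_sq.const_mul 2) (integrable_const 2),
          integral_const_mul]
        simp
    _ ≤ 2 * ((x + n * m) ^ 2 + n * v) + 2 := by
        gcongr
        exact integral_walk_sq_le hmeas hindep hL2 hmean hm hvar x n

end Moments

lemma memLp_two_of_le_of_integrable_max_sq {Ω : Type*} [MeasurableSpace Ω] {P : Measure Ω}
    [IsFiniteMeasure P] {Y : Ω → ℝ} {c : ℝ} (hY : AEStronglyMeasurable Y P)
    (hc : ∀ᵐ ω ∂P, c ≤ Y ω) (hsq : Integrable (fun ω => max (Y ω) 0 ^ 2) P) :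
    MemLp Y 2 P := by
  refine (memLp_two_iff_integrable_sq hY).2
    ((hsq.add (integrable_const (c ^ 2))).mono' (hY.pow 2) ?_)
  filter_upwards [hc] with ω hcω
  rw [Real.norm_eq_abs, abs_of_nonneg (sq_nonneg _)]
  show Y ω ^ 2 ≤ max (Y ω) 0 ^ 2 + c ^ 2
  rcases le_total (Y ω) 0 with h | h
  · rw [max_eq_right h]; nlinarith
  · rw [max_eq_left h]; nlinarith

lemma bound_at_ceil_div_le_mul {μ v x : ℝ} (hμ : 0 < μ) (hv : 0 ≤ v) (hx : 0 ≤ x) :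
    2 * ((x + ⌈(x + 1) / μ⌉₊ * -μ) ^ 2 + ⌈(x + 1) / μ⌉₊ * v) + 2
      ≤ (2 * (1 + μ) ^ 2 + 2 * v / μ + 2 * v + 2) * (x + 1) := by
  set n := ⌈(x + 1) / μ⌉₊
  have hn_ge : x + 1 ≤ n * μ := (div_le_iff₀ hμ).1 (Nat.le_ceil _)
  have hn_lt : (n : ℝ) < (x + 1) / μ + 1 := Nat.ceil_lt_add_one (by positivity)
  have hnμ : n * μ < x + 1 + μ := by
    have := (mul_lt_mul_iff_left₀ hμ).2 hn_lt
    rwa [add_mul, div_mul_cancel₀ _ hμ.ne', one_mul] at this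
  have hsq : (x + n * -μ) ^ 2 ≤ (1 + μ) ^ 2 := by nlinarith
  have hnv : n * v ≤ v / μ * (x + 1) + v := by
    have := mul_le_mul_of_nonneg_right hn_lt.le hv
    linarith [show ((x + 1) / μ + 1) * v = v / μ * (x + 1) + v by ring]
  have hexpand : (2 * (1 + μ) ^ 2 + 2 * v / μ + 2 * v + 2) * (x + 1)
      = 2 * (1 + μ) ^ 2 * (x + 1) + 2 * (v / μ * (x + 1)) + 2 * v * (x + 1) + 2 * (x + 1) := by
    ring
  nlinarith [mul_nonneg hx (sq_nonneg (1 + μ)), mul_nonneg hx hv]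

theorem stmt_17 {Ω : Type*} [MeasurableSpace Ω]
    (Pr : Measure Ω) [IsProbabilityMeasure Pr]
    (Z : ℕ → Ω → ℝ) (hZmeas : ∀ n, Measurable (Z n))
    (hindep : ProbabilityTheory.iIndepFun Z Pr)
    (hident : ∀ n, ProbabilityTheory.IdentDistrib (Z n) (Z 0) Pr Pr)
    (μm : ℝ) (hmean : ∫ ω, Z 0 ω ∂Pr = -μm) (hμm : 0 < μm)
    (z₀ : ℝ) (hbdd : ∀ n, ∀ᵐ ω ∂Pr, -z₀ ≤ Z n ω)
    (hsq : Integrable (fun ω => (max (Z 0 ω) 0) ^ 2) Pr) :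
    ∀ β : ℝ, 0 < β → β < 1 / 4 →
      ∃ d' : ℝ, 1 ≤ d' ∧ ∃ b' : ℝ,
        ∀ x : ℝ, 0 ≤ x →
          ∫⁻ ω, ENNReal.ofReal
              ((walk Z x
                  (if (x + 1) ^ 2 ≤ d' then 1 else ⌈Real.sqrt ((x + 1) ^ 2) / μm⌉₊) ω
                + 1) ^ 2) ∂Pr
            ≤ ENNReal.ofReal (β * (x + 1) ^ 2
                + (if (x + 1) ^ 2 ≤ d' then b' else 0)) := by
  intro β hβ _
  have hL2 : ∀ n, MemLp (Z n) 2 Pr := fun n => (hident n).memLp_iff.2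
    (memLp_two_of_le_of_integrable_max_sq (hZmeas 0).aestronglyMeasurable (hbdd 0) hsq)
  have hbound := lintegral_walk_add_one_sq_le hZmeas hindep hL2
    (fun n => (hident n).integral_eq.trans hmean) (neg_nonpos.2 hμm.le)
    (fun n => (hident n).variance_eq.le)
  set v := Var[Z 0; Pr]
  have hv : 0 ≤ v := variance_nonneg _ _
  set K := 2 * (1 + μm) ^ 2 + 2 * v / μm + 2 * v + 2
  set d := max 1 ((K / β) ^ 2)
  refine ⟨d, le_max_left _ _, 2 * d + 2 * μm ^ 2 + 2 * v + 2, fun x hx => ?_⟩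
  split_ifs with hsmall
  · refine (hbound x 1).trans (ENNReal.ofReal_le_ofReal ?_)
    push_cast
    nlinarith [mul_nonneg hx hμm.le, mul_nonneg hβ.le (sq_nonneg (x + 1))]
  · rw [Real.sqrt_sq (by linarith)]
    refine (hbound x _).trans (ENNReal.ofReal_le_ofReal ?_)
    have hK : K < β * (x + 1) := by
      have hsq : (K / β) ^ 2 < (x + 1) ^ 2 := (le_max_right _ _).trans_lt (not_le.1 hsmall)
      rw [mul_comm, ← div_lt_iff₀ hβ]
      exact lt_of_pow_lt_pow_left₀ 2 (by linarith) hsq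
    nlinarith [bound_at_ceil_div_le_mul hμm hv hx]
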